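/- arXiv:2412.12854 — 2 statements merged into one kernel-verified Lean document; each statement's English description precedes it below -/
import Mathlib

section
/- For d ≥ 2, as s → ∞, V_d^{-1}(s) = log 2 + (1/(d−1)) log(d−1) + (1/(d−1)) log s + o(1), where V_d^{-1} is the inverse function of V_d on [0,∞). -/
open MeasureTheory intervalIntegral Filter

/-- `V_d(r) = ∫₀^r (sinh t)^{d-1} dt`. -/
noncomputable def V (d : ℕ) (r : ℝ) : ℝ := ∫ t in (0:ℝ)..r, (Real.sinh t) ^ (d - 1)

/-!
Write `m = d - 1`. Since `sinh t = (eᵗ/2)(1 - e^{-2t})`, Bernoulli's inequality gives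
`0 ≤ (eᵗ/2)^m - sinh^m t ≤ m e^{-r} (e^r/2)^m` for `0 ≤ t ≤ r`; integrating,
`m V_d(r) / (e^r/2)^m → 1`, that is `log V_d(r) = m (r - log 2) - log m + o(1)`.
Substituting `r = V_d^{-1}(s)`, which tends to `∞` with `s`, and solving for `r` gives the
expansion.
-/

open Real Set Topology

lemma sinh_le_exp_div_two (t : ℝ) : sinh t ≤ exp t / 2 := by
  rw [sinh_eq]; linarith [exp_pos (-t)]

section IntegralSinhPow

variable (m : ℕ)

lemma tendsto_exp_div_two_pow_atTop (hm : m ≠ 0) :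
    Tendsto (fun r => (exp r / 2) ^ m) atTop atTop :=
  (tendsto_pow_atTop hm).comp (tendsto_exp_atTop.atTop_div_const two_pos)

lemma mul_integral_exp_div_two_pow (r : ℝ) :
    m * ∫ t in (0:ℝ)..r, (exp t / 2) ^ m = (exp r / 2) ^ m - (1 / 2) ^ m := by
  have hderiv (t : ℝ) : HasDerivAt (fun t => (exp t / 2) ^ m) (m * (exp t / 2) ^ m) t := by
    have := ((hasDerivAt_exp t).div_const 2).pow m
    rcases m.eq_zero_or_pos with rfl | hm
    · simpa using hasDerivAt_const t (1 : ℝ)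
    · rwa [mul_assoc, pow_sub_one_mul hm.ne'] at this
  rw [← intervalIntegral.integral_const_mul, integral_eq_sub_of_hasDerivAt (fun t _ => hderiv t)
    (Continuous.intervalIntegrable (by fun_prop) _ _), exp_zero]

lemma sinh_pow_le_exp_div_two_pow {t : ℝ} (ht : 0 ≤ t) : sinh t ^ m ≤ (exp t / 2) ^ m :=
  pow_le_pow_left₀ (sinh_nonneg_iff.2 ht) (sinh_le_exp_div_two t) m

variable {m}

lemma exp_div_two_pow_sub_sinh_pow_le (hm : 1 ≤ m) {t r : ℝ} (ht : 0 ≤ t) (htr : t ≤ r) :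
    (exp t / 2) ^ m - sinh t ^ m ≤ m * exp (-r) * (exp r / 2) ^ m := by
  have hsinh : sinh t = exp t / 2 * (1 + -exp (-2 * t)) := by
    rw [sinh_eq, show exp (-t) = exp t * exp (-2 * t) by rw [← exp_add]; ring_nf]; ring
  have hbernoulli : 1 + m * -exp (-2 * t) ≤ (1 + -exp (-2 * t)) ^ m :=
    one_add_mul_le_pow (by linarith [exp_le_one_iff.2 (by linarith : -2 * t ≤ 0)]) m
  have hexp : exp (-2 * t) * exp (m * t) ≤ exp (-r) * exp (m * r) := by
    rw [← exp_add, ← exp_add, exp_le_exp]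
    have : (1 : ℝ) ≤ m := by exact_mod_cast hm
    nlinarith
  calc (exp t / 2) ^ m - sinh t ^ m
      ≤ (exp t / 2) ^ m - (exp t / 2) ^ m * (1 + m * -exp (-2 * t)) := by
        rw [hsinh, mul_pow]; gcongr
    _ = m * (exp (-2 * t) * exp (m * t)) / 2 ^ m := by rw [div_pow, ← exp_nat_mul]; ring
    _ ≤ m * (exp (-r) * exp (m * r)) / 2 ^ m := by gcongr
    _ = m * exp (-r) * (exp r / 2) ^ m := by rw [div_pow, ← exp_nat_mul]; ring

lemma mul_integral_sinh_pow_le {r : ℝ} (hr : 0 ≤ r) :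
    m * ∫ t in (0:ℝ)..r, sinh t ^ m ≤ (exp r / 2) ^ m := by
  have hint : ∫ t in (0:ℝ)..r, sinh t ^ m ≤ ∫ t in (0:ℝ)..r, (exp t / 2) ^ m :=
    integral_mono_on hr (Continuous.intervalIntegrable (by fun_prop) _ _)
      (Continuous.intervalIntegrable (by fun_prop) _ _)
      fun t ht => sinh_pow_le_exp_div_two_pow m ht.1
  have := mul_integral_exp_div_two_pow m r
  nlinarith [pow_nonneg (by norm_num : (0:ℝ) ≤ 1 / 2) m, (Nat.cast_nonneg m : (0:ℝ) ≤ m)]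

lemma le_mul_integral_sinh_pow (hm : 1 ≤ m) {r : ℝ} (hr : 0 ≤ r) :
    (exp r / 2) ^ m - (1 / 2) ^ m - m ^ 2 * (r * exp (-r)) * (exp r / 2) ^ m
      ≤ m * ∫ t in (0:ℝ)..r, sinh t ^ m := by
  have hgap : ∫ t in (0:ℝ)..r, ((exp t / 2) ^ m - sinh t ^ m)
      ≤ ∫ _ in (0:ℝ)..r, m * exp (-r) * (exp r / 2) ^ m :=
    integral_mono_on hr (Continuous.intervalIntegrable (by fun_prop) _ _)
      (Continuous.intervalIntegrable (by fun_prop) _ _)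
      fun t ht => exp_div_two_pow_sub_sinh_pow_le hm ht.1 ht.2
  rw [intervalIntegral.integral_sub (Continuous.intervalIntegrable (by fun_prop) _ _)
    (Continuous.intervalIntegrable (by fun_prop) _ _), intervalIntegral.integral_const,
    smul_eq_mul, sub_zero] at hgap
  have := mul_integral_exp_div_two_pow m r
  have hm0 : (0:ℝ) ≤ m := Nat.cast_nonneg m
  nlinarith

lemma tendsto_mul_integral_sinh_pow_div (hm : 1 ≤ m) :
    Tendsto (fun r => m * (∫ t in (0:ℝ)..r, sinh t ^ m) / (exp r / 2) ^ m) atTop (𝓝 1) := by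
  have hpow := tendsto_exp_div_two_pow_atTop m (by omega)
  have hlower : Tendsto (fun r => 1 - (1 / 2) ^ m / (exp r / 2) ^ m - m ^ 2 * (r * exp (-r)))
      atTop (𝓝 1) := by
    have hre := (tendsto_pow_mul_exp_neg_atTop_nhds_zero 1).const_mul ((m : ℝ) ^ 2)
    simpa using (tendsto_const_nhds.sub (tendsto_const_nhds.div_atTop hpow)).sub hre
  refine tendsto_of_tendsto_of_tendsto_of_le_of_le' hlower tendsto_const_nhds ?_ ?_
  all_goals
    filter_upwards [eventually_ge_atTop 0] with r hr
    have ha : 0 < (exp r / 2) ^ m := by positivity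
  · rw [le_div_iff₀ ha]
    have := le_mul_integral_sinh_pow hm hr
    rw [sub_mul, sub_mul, div_mul_cancel₀ _ ha.ne']
    linarith
  · rw [div_le_one ha]
    exact mul_integral_sinh_pow_le hr

end IntegralSinhPow

lemma V_succ (m : ℕ) (r : ℝ) : V (m + 1) r = ∫ t in (0:ℝ)..r, sinh t ^ m := rfl

section VSucc

variable {m : ℕ}

lemma tendsto_V_succ_atTop (hm : 1 ≤ m) : Tendsto (V (m + 1)) atTop atTop := by
  have hpow : Tendsto (fun r => (exp r / 2) ^ m / m) atTop atTop :=
    (tendsto_exp_div_two_pow_atTop m (by omega)).atTop_div_const (by positivity)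
  refine ((tendsto_mul_integral_sinh_pow_div hm).pos_mul_atTop one_pos hpow).congr fun r => ?_
  have : (exp r / 2) ^ m ≠ 0 := by positivity
  have : (m : ℝ) ≠ 0 := by positivity
  simp only [V_succ]
  field_simp

lemma exists_V_succ_eq (hm : 1 ≤ m) {s : ℝ} (hs : 0 ≤ s) : ∃ r ≥ 0, V (m + 1) r = s := by
  have hcont : Continuous (V (m + 1)) := continuous_primitive (fun _ _ =>
    Continuous.intervalIntegrable (by fun_prop) _ _) 0
  have hV0 : V (m + 1) 0 = 0 := integral_same
  exact intermediate_value_Ici hcont.continuousOn (tendsto_V_succ_atTop hm)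
    (show s ∈ Ici (V (m + 1) 0) by rwa [mem_Ici, hV0])

lemma tendsto_V_succ_log (hm : 1 ≤ m) :
    Tendsto (fun r => r - (log 2 + 1 / m * log m + 1 / m * log (V (m + 1) r))) atTop (𝓝 0) := by
  have hratio := tendsto_mul_integral_sinh_pow_div hm
  have hlog := (hratio.log one_ne_zero).const_mul (-1 / (m : ℝ))
  rw [log_one, mul_zero] at hlog
  refine hlog.congr' ?_
  filter_upwards [hratio.eventually (eventually_gt_nhds one_pos)] with r hr
  have ha : (exp r / 2) ^ m ≠ 0 := by positivity
  have hm0 : (m : ℝ) ≠ 0 := by positivity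
  have hV : V (m + 1) r ≠ 0 := by
    rintro h
    simp [← V_succ, h] at hr
  rw [V_succ] at hV ⊢
  rw [log_div (mul_ne_zero hm0 hV) ha, log_mul hm0 hV, log_pow,
    log_div (exp_ne_zero r) two_ne_zero, log_exp]
  field_simp
  ring

lemma tendsto_atTop_of_V_succ_inverse (hm : 1 ≤ m) {W : ℝ → ℝ}
    (hW : ∀ r ≥ (0:ℝ), W (V (m + 1) r) = r) : Tendsto W atTop atTop := by
  have hm1 : (1 : ℝ) ≤ m := by exact_mod_cast hm
  refine tendsto_atTop_mono' atTop ?_ (tendsto_log_atTop.atTop_div_const (by positivity))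
  filter_upwards [eventually_gt_atTop 0] with s hs
  obtain ⟨r, hr, rfl⟩ := exists_V_succ_eq hm hs.le
  rw [hW r hr, div_le_iff₀ (by positivity), log_le_iff_le_exp hs, mul_comm, exp_nat_mul]
  have hV : 0 ≤ V (m + 1) r :=
    integral_nonneg hr fun t ht => pow_nonneg (sinh_nonneg_iff.2 ht.1) m
  calc V (m + 1) r ≤ m * V (m + 1) r := le_mul_of_one_le_left hV hm1
    _ ≤ (exp r / 2) ^ m := mul_integral_sinh_pow_le hr
    _ ≤ exp r ^ m := by gcongr; linarith [exp_pos r]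

end VSucc

theorem Vinv_asymptotic_general (d : ℕ) (hd : 2 ≤ d) (W : ℝ → ℝ)
    (hW : ∀ r ≥ (0:ℝ), W (V d r) = r) :
    Tendsto (fun s : ℝ =>
        W s - (Real.log 2 + (1 / ((d:ℝ) - 1)) * Real.log ((d:ℝ) - 1)
          + (1 / ((d:ℝ) - 1)) * Real.log s))
      atTop (nhds 0) := by
  obtain ⟨m, rfl⟩ : ∃ m, d = m + 1 := ⟨d - 1, by omega⟩
  have hm : 1 ≤ m := by omega
  rw [show ((m + 1 : ℕ) : ℝ) - 1 = m by push_cast; ring]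
  refine ((tendsto_V_succ_log hm).comp (tendsto_atTop_of_V_succ_inverse hm hW)).congr' ?_
  filter_upwards [eventually_ge_atTop 0] with s hs
  obtain ⟨r, hr, rfl⟩ := exists_V_succ_eq hm hs
  simp only [Function.comp_apply, hW r hr]

/-- For `d ≥ 2`, the inverse `W = V_d^{-1}` of `V_d` on `[0,∞)` satisfies
`W(s) = log 2 + (1/(d-1)) log(d-1) + (1/(d-1)) log s + o(1)` as `s → ∞`. -/
theorem Vinv_asymptotic (d : ℕ) (hd : 2 ≤ d) (W : ℝ → ℝ)
    (hW : ∀ r ≥ (0:ℝ), W (V d r) = r) (hW' : ∀ s ≥ (0:ℝ), V d (W s) = s) :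
    Tendsto (fun s : ℝ =>
        W s - (Real.log 2 + (1 / ((d:ℝ) - 1)) * Real.log ((d:ℝ) - 1)
          + (1 / ((d:ℝ) - 1)) * Real.log s))
      atTop (nhds 0) :=
  Vinv_asymptotic_general d hd W hW
end

section
/- For each d ≥ 2 there exists a constant c_d ∈ (0,∞) such that Q^𝔹_d(ρ;0) ≤ c_d (1−ρ)^{(d-1)/2} (1 ∨ |log(1−ρ)|) for all ρ ∈ [0,1). In particular Q^𝔹_d(ρ;0) → 0 as ρ ↗ 1. -/
open MeasureTheory intervalIntegral Filter

/-- `𝔖_k`: the `k`-dimensional Lebesgue surface volume of the unit `k`-sphere in `ℝ^{k+1}`,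
`𝔖_k = 2 π^{(k+1)/2} / Γ((k+1)/2)`. -/
noncomputable def sphereSurf (k : ℕ) : ℝ :=
  2 * Real.pi ^ (((k:ℝ) + 1) / 2) / Real.Gamma (((k:ℝ) + 1) / 2)

/-- `Q^𝔹_d(ρ;0) = (𝔖_{d-2}/𝔖_{d-1}) ∫₀^π ((1−ρ²)/(1+ρ²−2ρcosθ))^{(d-1)/2} (sinθ)^{d-2} dθ`. -/
noncomputable def Qball (d : ℕ) (ρ : ℝ) : ℝ :=
  (sphereSurf (d - 2) / sphereSurf (d - 1)) *
    ∫ θ in (0:ℝ)..Real.pi,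
      ((1 - ρ ^ 2) / (1 + ρ ^ 2 - 2 * ρ * Real.cos θ)) ^ (((d:ℝ) - 1) / 2)
        * (Real.sin θ) ^ (d - 2)

/-! Write `ε = 1 - ρ`. Since `1 - ρ² ≤ 2ε`, `1 + ρ² - 2ρ cos θ ≥ (ε² + 1 - cos θ) / 4` and
`sin² θ ≤ 2 (1 - cos θ)`, the integrand is at most a constant times
`ε^{(d-1)/2} (ε² + 1 - cos θ)^{-1/2}`. The last factor is at most `1/ε` on `[0, ε]` and, as
`1 - cos θ ≥ 2θ²/π²`, at most `π/θ` on `[ε, π]`; so its integral is `O(1 + |log ε|)`. -/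

open Real Set Topology

lemma sphereSurf_pos (k : ℕ) : 0 < sphereSurf k := by
  have := Gamma_pos_of_pos (by positivity : (0:ℝ) < ((k:ℝ) + 1) / 2)
  unfold sphereSurf
  positivity

lemma sin_sq_le_two_mul_one_sub_cos (θ : ℝ) : sin θ ^ 2 ≤ 2 * (1 - cos θ) := by
  nlinarith [sin_sq_add_cos_sq θ, cos_le_one θ, neg_one_le_cos θ]

lemma one_sub_sq_add_one_sub_cos_le {ρ : ℝ} (hρ : 0 ≤ ρ) (θ : ℝ) :
    (1 - ρ) ^ 2 + (1 - cos θ) ≤ 4 * (1 + ρ ^ 2 - 2 * ρ * cos θ) := by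
  nlinarith [cos_le_one θ, neg_one_le_cos θ, mul_nonneg hρ (sub_nonneg.2 (cos_le_one θ))]

lemma sq_add_one_sub_cos_pos {ε : ℝ} (hε : 0 < ε) (θ : ℝ) : 0 < ε ^ 2 + (1 - cos θ) := by
  have := cos_le_one θ
  positivity

lemma poissonKernel_nonneg {ρ : ℝ} (hρ : ρ ^ 2 ≤ 1) (θ : ℝ) :
    0 ≤ (1 - ρ ^ 2) / (1 + ρ ^ 2 - 2 * ρ * cos θ) :=
  div_nonneg (sub_nonneg.2 hρ) (by nlinarith [sin_sq_add_cos_sq θ, sq_nonneg (ρ - cos θ)])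

lemma poissonKernel_denom_pos {ρ : ℝ} (hρ : ρ ∈ Ico (0:ℝ) 1) (θ : ℝ) :
    0 < 1 + ρ ^ 2 - 2 * ρ * cos θ := by
  nlinarith [one_sub_sq_add_one_sub_cos_le hρ.1 θ, sq_add_one_sub_cos_pos (sub_pos.2 hρ.2) θ]

lemma continuous_poissonIntegrand (n : ℕ) {ρ : ℝ} (hρ : ρ ∈ Ico (0:ℝ) 1) :
    Continuous fun θ =>
      ((1 - ρ ^ 2) / (1 + ρ ^ 2 - 2 * ρ * cos θ)) ^ (((n:ℝ) + 1) / 2) * sin θ ^ n :=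
  ((continuous_const.div (by fun_prop) fun θ => (poissonKernel_denom_pos hρ θ).ne').rpow_const
    fun _ => .inr (by positivity)).mul (continuous_sin.pow n)

lemma poissonIntegrand_le (n : ℕ) {ρ θ : ℝ} (hρ : ρ ∈ Ico (0:ℝ) 1) (hθ : θ ∈ Icc 0 π) :
    ((1 - ρ ^ 2) / (1 + ρ ^ 2 - 2 * ρ * cos θ)) ^ (((n:ℝ) + 1) / 2) * sin θ ^ n ≤
      8 ^ (((n:ℝ) + 1) / 2) * 2 ^ ((n:ℝ) / 2) * (1 - ρ) ^ (((n:ℝ) + 1) / 2) *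
        (√((1 - ρ) ^ 2 + (1 - cos θ)))⁻¹ := by
  set α : ℝ := ((n:ℝ) + 1) / 2 with hα
  set ε := 1 - ρ
  set E := ε ^ 2 + (1 - cos θ)
  have hε : 0 < ε := sub_pos.2 hρ.2
  have hE : 0 < E := sq_add_one_sub_cos_pos hε θ
  have hsin : 0 ≤ sin θ := sin_nonneg_of_nonneg_of_le_pi hθ.1 hθ.2
  have hpoisson : (1 - ρ ^ 2) / (1 + ρ ^ 2 - 2 * ρ * cos θ) ≤ 8 * ε / E := by
    rw [div_le_div_iff₀ (poissonKernel_denom_pos hρ θ) hE]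
    nlinarith [one_sub_sq_add_one_sub_cos_le hρ.1 θ]
  have hsin_pow : sin θ ^ n ≤ (2 * E) ^ ((n:ℝ) / 2) := by
    calc sin θ ^ n = (sin θ ^ 2) ^ ((n:ℝ) / 2) := by
          rw [← rpow_natCast_mul hsin, ← rpow_natCast]; ring_nf
      _ ≤ (2 * E) ^ ((n:ℝ) / 2) := by
          gcongr; nlinarith [sin_sq_le_two_mul_one_sub_cos θ, sq_nonneg ε]
  have hE_pow : E ^ ((n:ℝ) / 2) = E ^ α * (√E)⁻¹ := by
    rw [sqrt_eq_rpow, ← rpow_neg hE.le, ← rpow_add hE, hα]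
    ring_nf
  calc ((1 - ρ ^ 2) / (1 + ρ ^ 2 - 2 * ρ * cos θ)) ^ α * sin θ ^ n
      ≤ (8 * ε / E) ^ α * (2 * E) ^ ((n:ℝ) / 2) := by
        gcongr
        exact poissonKernel_nonneg (by nlinarith [hρ.1, hρ.2]) θ
    _ = 8 ^ α * 2 ^ ((n:ℝ) / 2) * ε ^ α * (√E)⁻¹ := by
        rw [div_rpow (by positivity) hE.le, mul_rpow (by norm_num) hε.le,
          mul_rpow (by norm_num) hE.le, hE_pow]
        field_simp

lemma continuous_inv_sqrt_sq_add_one_sub_cos {ε : ℝ} (hε : 0 < ε) :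
    Continuous fun θ => (√(ε ^ 2 + (1 - cos θ)))⁻¹ :=
  (continuous_const.add (continuous_const.sub continuous_cos)).sqrt.inv₀
    fun θ => (sqrt_pos.2 (sq_add_one_sub_cos_pos hε θ)).ne'

lemma integral_inv_sqrt_sq_add_one_sub_cos_zero_le_one {ε : ℝ} (hε : 0 < ε) :
    ∫ θ in (0:ℝ)..ε, (√(ε ^ 2 + (1 - cos θ)))⁻¹ ≤ 1 := by
  calc ∫ θ in (0:ℝ)..ε, (√(ε ^ 2 + (1 - cos θ)))⁻¹ ≤ ∫ _ in (0:ℝ)..ε, ε⁻¹ := by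
        refine integral_mono_on hε.le ?_ intervalIntegrable_const fun θ _ => ?_
        · exact (continuous_inv_sqrt_sq_add_one_sub_cos hε).intervalIntegrable _ _
        · gcongr
          exact le_sqrt_of_sq_le (by linarith [cos_le_one θ])
    _ = 1 := by simp [hε.ne']

lemma integral_inv_sqrt_sq_add_one_sub_cos_le_pi_mul_log {ε : ℝ} (hε : 0 < ε) (hεπ : ε ≤ π) :
    ∫ θ in ε..π, (√(ε ^ 2 + (1 - cos θ)))⁻¹ ≤ π * log (π / ε) := by
  calc ∫ θ in ε..π, (√(ε ^ 2 + (1 - cos θ)))⁻¹ ≤ ∫ θ in ε..π, π * θ⁻¹ := by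
        refine integral_mono_on hεπ
          ((continuous_inv_sqrt_sq_add_one_sub_cos hε).intervalIntegrable _ _)
          ((intervalIntegrable_inv_iff.2 (.inr (notMem_uIcc_of_lt hε pi_pos))).const_mul π)
          fun θ hθ => ?_
        have hθ0 : 0 < θ := hε.trans_le hθ.1
        have hcos := cos_le_one_sub_mul_cos_sq (abs_le.2 ⟨by linarith, hθ.2⟩)
        have hsq : (θ / π) ^ 2 ≤ ε ^ 2 + (1 - cos θ) := by
          rw [div_pow]
          have : θ ^ 2 / π ^ 2 ≤ 2 / π ^ 2 * θ ^ 2 := by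
            rw [div_mul_eq_mul_div]; gcongr; linarith [sq_nonneg θ]
          nlinarith [sq_nonneg ε]
        calc (√(ε ^ 2 + (1 - cos θ)))⁻¹ ≤ (θ / π)⁻¹ := by
              gcongr; exact le_sqrt_of_sq_le hsq
          _ = π * θ⁻¹ := by rw [inv_div, div_eq_mul_inv]
    _ = π * log (π / ε) := by
        rw [intervalIntegral.integral_const_mul, integral_inv_of_pos hε pi_pos]

lemma integral_inv_sqrt_sq_add_one_sub_cos_le {ε : ℝ} (hε : 0 < ε) (hεπ : ε ≤ π) :
    ∫ θ in (0:ℝ)..π, (√(ε ^ 2 + (1 - cos θ)))⁻¹ ≤ 1 + π * log (π / ε) := by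
  have hcont := continuous_inv_sqrt_sq_add_one_sub_cos hε
  rw [← integral_add_adjacent_intervals (hcont.intervalIntegrable 0 ε)
    (hcont.intervalIntegrable ε π)]
  linarith [integral_inv_sqrt_sq_add_one_sub_cos_zero_le_one hε,
    integral_inv_sqrt_sq_add_one_sub_cos_le_pi_mul_log hε hεπ]

lemma one_add_pi_mul_log_pi_div_le {ε : ℝ} (hε : ε ≠ 0) :
    1 + π * log (π / ε) ≤ (1 + π * log π + π) * max 1 |log ε| := by
  have hlogπ : 0 ≤ log π := log_nonneg (by linarith [pi_gt_three])
  have hM₁ : 1 ≤ max 1 |log ε| := le_max_left _ _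
  have hM : -log ε ≤ max 1 |log ε| := (neg_le_abs _).trans (le_max_right _ _)
  rw [log_div pi_ne_zero hε]
  nlinarith [mul_le_mul_of_nonneg_left hM₁ (by positivity : 0 ≤ 1 + π * log π),
    mul_le_mul_of_nonneg_left hM pi_pos.le]

lemma Qball_nonneg (d : ℕ) {ρ : ℝ} (hρ : ρ ^ 2 ≤ 1) : 0 ≤ Qball d ρ := by
  refine mul_nonneg (div_nonneg (sphereSurf_pos _).le (sphereSurf_pos _).le)
    (integral_nonneg pi_pos.le fun θ hθ => ?_)
  exact mul_nonneg (rpow_nonneg (poissonKernel_nonneg hρ θ) _)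
    (pow_nonneg (sin_nonneg_of_nonneg_of_le_pi hθ.1 hθ.2) _)

lemma Qball_le {d : ℕ} (hd : 2 ≤ d) {ρ : ℝ} (hρ : ρ ∈ Ico (0:ℝ) 1) :
    Qball d ρ ≤ sphereSurf (d - 2) / sphereSurf (d - 1) * 8 ^ (((d:ℝ) - 1) / 2) *
      2 ^ (((d:ℝ) - 2) / 2) * (1 + π * log π + π) *
        (1 - ρ) ^ (((d:ℝ) - 1) / 2) * max 1 |log (1 - ρ)| := by
  obtain ⟨n, rfl⟩ := Nat.exists_eq_add_of_le' hd
  have hε : 0 < 1 - ρ := sub_pos.2 hρ.2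
  have hα : ((↑(n + 2) : ℝ) - 1) / 2 = ((n:ℝ) + 1) / 2 := by push_cast; ring
  have hβ : ((↑(n + 2) : ℝ) - 2) / 2 = (n:ℝ) / 2 := by push_cast; ring
  set S := sphereSurf n / sphereSurf (n + 1)
  set K : ℝ := 8 ^ (((n:ℝ) + 1) / 2) * 2 ^ ((n:ℝ) / 2) * (1 - ρ) ^ (((n:ℝ) + 1) / 2)
  have hS : 0 ≤ S := (div_pos (sphereSurf_pos _) (sphereSurf_pos _)).le
  rw [Qball, Nat.add_sub_cancel, show n + 2 - 1 = n + 1 by omega, hα, hβ]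
  calc S * ∫ θ in (0:ℝ)..π, ((1 - ρ ^ 2) / (1 + ρ ^ 2 - 2 * ρ * cos θ)) ^ (((n:ℝ) + 1) / 2)
        * sin θ ^ n
      ≤ S * ∫ θ in (0:ℝ)..π, K * (√((1 - ρ) ^ 2 + (1 - cos θ)))⁻¹ := by
        refine mul_le_mul_of_nonneg_left (integral_mono_on pi_pos.le ?_ ?_
          fun θ hθ => poissonIntegrand_le n hρ hθ) hS
        · exact (continuous_poissonIntegrand n hρ).intervalIntegrable _ _
        · exact (continuous_const.mul (continuous_inv_sqrt_sq_add_one_sub_cos hε)).intervalIntegrable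
            _ _
    _ = S * K * ∫ θ in (0:ℝ)..π, (√((1 - ρ) ^ 2 + (1 - cos θ)))⁻¹ := by
        rw [intervalIntegral.integral_const_mul, ← mul_assoc]
    _ ≤ S * K * (1 + π * log (π / (1 - ρ))) := by
        gcongr
        exact integral_inv_sqrt_sq_add_one_sub_cos_le hε (by linarith [hρ.1, pi_gt_three])
    _ ≤ S * K * ((1 + π * log π + π) * max 1 |log (1 - ρ)|) := by
        gcongr
        exact one_add_pi_mul_log_pi_div_le hε.ne'
    _ = _ := by ring

lemma tendsto_rpow_mul_max_one_abs_log {α : ℝ} (hα : 0 < α) :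
    Tendsto (fun t : ℝ => t ^ α * max 1 |log t|) (𝓝[>] 0) (𝓝 0) := by
  have hpow : Tendsto (fun t : ℝ => t ^ α) (𝓝[>] 0) (𝓝 0) :=
    ((continuous_rpow_const hα.le).tendsto' 0 0 (zero_rpow hα.ne')).mono_left nhdsWithin_le_nhds
  have hlog : Tendsto (fun t : ℝ => |log t * t ^ α|) (𝓝[>] 0) (𝓝 0) := by
    simpa using (tendsto_log_mul_rpow_nhdsGT_zero hα).abs
  have hmax := hpow.max hlog
  rw [max_self] at hmax
  refine hmax.congr' (eventually_nhdsWithin_of_forall fun t ht => ?_)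
  have ht : 0 ≤ t ^ α := rpow_nonneg (le_of_lt ht) α
  simp only [abs_mul, abs_of_nonneg ht]
  rw [mul_max_of_nonneg _ _ ht, mul_one, mul_comm]

lemma tendsto_one_sub_nhdsLT_one : Tendsto (fun ρ : ℝ => 1 - ρ) (𝓝[<] 1) (𝓝[>] 0) :=
  tendsto_nhdsWithin_iff.2
    ⟨((continuous_sub_left 1).tendsto' 1 0 (sub_self 1)).mono_left nhdsWithin_le_nhds,
      eventually_nhdsWithin_of_forall fun _ hρ => mem_Ioi.2 (sub_pos.2 hρ)⟩

/-- For each `d ≥ 2` there is `c_d ∈ (0,∞)` with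
`Q^𝔹_d(ρ;0) ≤ c_d (1−ρ)^{(d-1)/2} (1 ∨ |log(1−ρ)|)` on `[0,1)`;
in particular `Q^𝔹_d(ρ;0) → 0` as `ρ ↗ 1`. -/
theorem Qball_upper_bound (d : ℕ) (hd : 2 ≤ d) :
    (∃ c : ℝ, 0 < c ∧ ∀ ρ ∈ Set.Ico (0:ℝ) 1,
      Qball d ρ ≤ c * (1 - ρ) ^ (((d:ℝ) - 1) / 2) * max 1 |Real.log (1 - ρ)|) ∧
    Tendsto (Qball d) (nhdsWithin 1 (Set.Iio 1)) (nhds 0) := by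
  set c := sphereSurf (d - 2) / sphereSurf (d - 1) * 8 ^ (((d:ℝ) - 1) / 2) *
    2 ^ (((d:ℝ) - 2) / 2) * (1 + π * log π + π)
  have hc : 0 < c := by
    have := sphereSurf_pos (d - 2)
    have := sphereSurf_pos (d - 1)
    have := log_nonneg (by linarith [pi_gt_three] : (1:ℝ) ≤ π)
    positivity
  have hα : 0 < ((d:ℝ) - 1) / 2 := by
    have : (2:ℝ) ≤ d := by exact_mod_cast hd
    linarith
  have hbound : ∀ ρ ∈ Ico (0:ℝ) 1,
      Qball d ρ ≤ c * (1 - ρ) ^ (((d:ℝ) - 1) / 2) * max 1 |log (1 - ρ)| :=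
    fun ρ hρ => Qball_le hd hρ
  refine ⟨⟨c, hc, hbound⟩, ?_⟩
  have hρ : ∀ᶠ ρ in 𝓝[<] (1:ℝ), ρ ∈ Ico 0 1 := Ico_mem_nhdsLT (by norm_num)
  refine squeeze_zero' (hρ.mono fun ρ h => Qball_nonneg d (by nlinarith [h.1, h.2]))
    (hρ.mono hbound) ?_
  simpa [mul_assoc] using
    ((tendsto_rpow_mul_max_one_abs_log hα).comp tendsto_one_sub_nhdsLT_one).const_mul c
end
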